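/- arXiv:1609.02383 — 3 statements merged into one kernel-verified Lean document; each statement's English description precedes it below -/
import Mathlib

section
/- Let Ω ⊆ ℝ^n be a convex set, let Q ∈ ℝ^{n×n} be a positive definite matrix, let r : ℝ^n → ℝ be differentiable and 1-strongly convex on Ω with respect to ‖·‖_Q, let x_t ∈ Ω and g_t, g̃_t ∈ ℝ^n, let x̂_t be a minimizer over Ω of x ↦ ⟨g̃_t, x⟩ + B_r(x, x_t), and let x_{t+1} be a minimizer over Ω of x ↦ ⟨g_t, x⟩ + B_r(x, x_t). Then for every x* ∈ Ω, ⟨x̂_t − x*, g_t⟩ ≤ B_r(x*, x_t) − B_r(x*, x_{t+1}) + (1/2)‖g_t − g̃_t‖_{Q⁻¹}². -/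
/-!
The first-order optimality conditions of the two mirror steps, rewritten with the three-point
identity of Bregman divergences, bound `⟪x_{t+1} - x*, g_t⟫` and `⟪x̂_t - x_{t+1}, g̃_t⟫`; the
remaining term `⟪x̂_t - x_{t+1}, g_t - g̃_t⟫` is bounded by the Fenchel–Young inequality
`⟪a, b⟫ ≤ ½‖a‖_Q² + ½‖b‖_{Q⁻¹}²`, whose first half is absorbed by strong convexity into
`B_r(x_{t+1}, x̂_t)`. Summing, the Bregman terms telescope up to `-B_r(x̂_t, x_t) ≤ 0`.
-/

open scoped RealInnerProductSpace
open Finset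

noncomputable def breg {n : ℕ} (ψ : EuclideanSpace ℝ (Fin n) → ℝ)
    (Dψ : EuclideanSpace ℝ (Fin n) → EuclideanSpace ℝ (Fin n))
    (x y : EuclideanSpace ℝ (Fin n)) : ℝ :=
  ψ x - ψ y - ⟪Dψ y, x - y⟫

noncomputable def quadForm {n : ℕ} (Q : Matrix (Fin n) (Fin n) ℝ)
    (x : EuclideanSpace ℝ (Fin n)) : ℝ :=
  ∑ i, ∑ j, x i * Q i j * x j

open Matrix

theorem Matrix.PosDef.two_mul_dotProduct_le {ι : Type*} [Fintype ι] [DecidableEq ι]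
    {Q : Matrix ι ι ℝ} (hQ : Q.PosDef) (a b : ι → ℝ) :
    2 * (a ⬝ᵥ b) ≤ a ⬝ᵥ Q *ᵥ a + b ⬝ᵥ Q⁻¹ *ᵥ b := by
  set c := Q⁻¹ *ᵥ b
  have hQc : Q *ᵥ c = b := by
    rw [mulVec_mulVec, mul_nonsing_inv Q hQ.det_pos.ne'.isUnit, one_mulVec]
  have hQT : Qᵀ = Q := hQ.isHermitian
  have hcQa : c ⬝ᵥ Q *ᵥ a = a ⬝ᵥ b := by
    rw [dotProduct_mulVec, ← mulVec_transpose, hQT, hQc, dotProduct_comm]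
  -- the inequality is `0 ≤ (a - Q⁻¹ b)ᵀ Q (a - Q⁻¹ b)` expanded
  have h0 : 0 ≤ (a - c) ⬝ᵥ Q *ᵥ (a - c) := by
    simpa using hQ.posSemidef.dotProduct_mulVec_nonneg (a - c)
  rw [mulVec_sub, hQc, sub_dotProduct, dotProduct_sub, dotProduct_sub, hcQa,
    dotProduct_comm c b] at h0
  linarith

theorem quadForm_eq_dotProduct {n : ℕ} (Q : Matrix (Fin n) (Fin n) ℝ)
    (x : EuclideanSpace ℝ (Fin n)) : quadForm Q x = x.ofLp ⬝ᵥ Q *ᵥ x.ofLp := by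
  simp [quadForm, dotProduct, mulVec, mul_sum, mul_assoc]

theorem quadForm_neg {n : ℕ} (Q : Matrix (Fin n) (Fin n) ℝ) (x : EuclideanSpace ℝ (Fin n)) :
    quadForm Q (-x) = quadForm Q x := by
  simp [quadForm]

theorem Matrix.PosDef.quadForm_nonneg {n : ℕ} {Q : Matrix (Fin n) (Fin n) ℝ} (hQ : Q.PosDef)
    (x : EuclideanSpace ℝ (Fin n)) : 0 ≤ quadForm Q x := by
  simpa [quadForm_eq_dotProduct] using hQ.posSemidef.dotProduct_mulVec_nonneg x.ofLp

theorem Matrix.PosDef.inner_le_quadForm_add_quadForm_inv {n : ℕ} {Q : Matrix (Fin n) (Fin n) ℝ}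
    (hQ : Q.PosDef) (a b : EuclideanSpace ℝ (Fin n)) :
    ⟪a, b⟫ ≤ (1/2) * quadForm Q a + (1/2) * quadForm Q⁻¹ b := by
  have h := hQ.two_mul_dotProduct_le a.ofLp b.ofLp
  rw [EuclideanSpace.inner_eq_star_dotProduct, star_trivial, dotProduct_comm,
    quadForm_eq_dotProduct, quadForm_eq_dotProduct]
  linarith

theorem IsMinOn.inner_gradient_sub_nonneg {F : Type*} [NormedAddCommGroup F]
    [InnerProductSpace ℝ F] [CompleteSpace F] {f : F → ℝ} {f' : F} {s : Set F} {a x : F}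
    (hmin : IsMinOn f s a) (hs : Convex ℝ s) (ha : a ∈ s) (hx : x ∈ s)
    (hf : HasGradientAt f f' a) : 0 ≤ ⟪f', x - a⟫ := by
  simpa using hmin.localize.hasFDerivWithinAt_nonneg hf.hasFDerivAt.hasFDerivWithinAt
    (sub_mem_posTangentConeAt_of_segment_subset (hs.segment_subset ha hx))

section Bregman

variable {n : ℕ} {r : EuclideanSpace ℝ (Fin n) → ℝ}
  {Dr : EuclideanSpace ℝ (Fin n) → EuclideanSpace ℝ (Fin n)}

theorem breg_three_point (r) (Dr) (a b c : EuclideanSpace ℝ (Fin n)) :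
    ⟪Dr c - Dr b, a - c⟫ = breg r Dr a b - breg r Dr a c - breg r Dr c b := by
  simp only [breg, inner_sub_left, inner_sub_right]
  ring

theorem hasGradientAt_inner_add_breg {z : EuclideanSpace ℝ (Fin n)}
    (hr : HasGradientAt r (Dr z) z) (c y : EuclideanSpace ℝ (Fin n)) :
    HasGradientAt (fun x => ⟪c, x⟫ + breg r Dr x y) (c + (Dr z - Dr y)) z := by
  rw [hasGradientAt_iff_hasFDerivAt] at hr ⊢
  have hlin : ∀ v : EuclideanSpace ℝ (Fin n), HasFDerivAt (fun x => ⟪v, x⟫) (innerSL ℝ v) z :=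
    fun v => (innerSL ℝ v).hasFDerivAt
  have hsum := (hlin c).add ((hr.sub_const (r y)).sub ((hlin (Dr y)).sub_const ⟪Dr y, y⟫))
  have hfun : (fun x => ⟪c, x⟫ + breg r Dr x y) =
      fun x => ⟪c, x⟫ + ((r x - r y) - (⟪Dr y, x⟫ - ⟪Dr y, y⟫)) := by
    funext x
    simp only [breg, inner_sub_right]
  have hderiv : InnerProductSpace.toDual ℝ _ (c + (Dr z - Dr y)) =
      innerSL ℝ c + (InnerProductSpace.toDual ℝ _ (Dr z) - innerSL ℝ (Dr y)) := by
    ext v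
    simp
  rw [hfun, hderiv]
  exact hsum

theorem IsMinOn.inner_sub_le_breg {Ω : Set (EuclideanSpace ℝ (Fin n))} (hΩ : Convex ℝ Ω)
    {c y z x : EuclideanSpace ℝ (Fin n)} (hmin : IsMinOn (fun x => ⟪c, x⟫ + breg r Dr x y) Ω z)
    (hz : z ∈ Ω) (hx : x ∈ Ω) (hr : HasGradientAt r (Dr z) z) :
    ⟪c, z - x⟫ ≤ breg r Dr x y - breg r Dr x z - breg r Dr z y := by
  have h := hmin.inner_gradient_sub_nonneg hΩ hz hx (hasGradientAt_inner_add_breg hr c y)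
  rw [inner_add_left, breg_three_point, ← neg_sub z x, inner_neg_right] at h
  linarith

end Bregman

theorem stmt_2 {n : ℕ} (Ω : Set (EuclideanSpace ℝ (Fin n))) (hΩ : Convex ℝ Ω)
    (Q : Matrix (Fin n) (Fin n) ℝ) (hQ : Q.PosDef)
    (r : EuclideanSpace ℝ (Fin n) → ℝ)
    (Dr : EuclideanSpace ℝ (Fin n) → EuclideanSpace ℝ (Fin n))
    (hdiff : ∀ z, HasGradientAt r (Dr z) z)
    (hstrong : ∀ x ∈ Ω, ∀ y ∈ Ω, (1/2) * quadForm Q (x - y) ≤ breg r Dr x y)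
    (xt xhat xnext gt gtilde : EuclideanSpace ℝ (Fin n))
    (hxt : xt ∈ Ω) (hxhat : xhat ∈ Ω) (hxnext : xnext ∈ Ω)
    (hhat : IsMinOn (fun x => ⟪gtilde, x⟫ + breg r Dr x xt) Ω xhat)
    (hnext : IsMinOn (fun x => ⟪gt, x⟫ + breg r Dr x xt) Ω xnext) :
    ∀ xs ∈ Ω, ⟪xhat - xs, gt⟫ ≤
      breg r Dr xs xt - breg r Dr xs xnext + (1/2) * quadForm Q⁻¹ (gt - gtilde) := by
  intro xs hxs
  have hsplit : ⟪xhat - xs, gt⟫ =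
      ⟪xhat - xnext, gt - gtilde⟫ + ⟪gtilde, xhat - xnext⟫ + ⟪gt, xnext - xs⟫ := by
    simp only [inner_sub_right, real_inner_comm gt, real_inner_comm gtilde]
    ring
  have hstep_next := hnext.inner_sub_le_breg hΩ hxnext hxs (hdiff xnext)
  have hstep_hat := hhat.inner_sub_le_breg hΩ hxhat hxnext (hdiff xhat)
  have hyoung := hQ.inner_le_quadForm_add_quadForm_inv (xhat - xnext) (gt - gtilde)
  have hstrong_next := hstrong xnext hxnext xhat hxhat
  rw [← quadForm_neg, neg_sub] at hstrong_next
  have hbreg_nonneg : 0 ≤ breg r Dr xhat xt :=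
    (mul_nonneg (by norm_num) (hQ.quadForm_nonneg _)).trans (hstrong xhat hxhat xt hxt)
  linarith
end

section
/- Under the hypotheses of the curvature-adaptive optimistic mirror descent theorem with uniformly strongly convex losses: let Ω ⊆ ℝ^n be convex with sup_{x,y∈Ω}‖x − y‖ ≤ 2R (R > 0), γ > 0, δ > 0, H_1, …, H_T with 0 < H ≤ H_t ≤ γ for all t, f_t satisfying f_t(y) ≥ f_t(x̂_t) + ⟨g_t, y − x̂_t⟩ + (H_t/2)‖y − x̂_t‖² for all y ∈ Ω, λ_t := (sqrt((H_{1:t} + λ_{1:t−1})² + 6‖g_t − g̃_t‖²/R²) − (H_{1:t} + λ_{1:t−1}))/2 with λ_t ≤ δ for all t ∈ [T], x̂_t a minimizer over Ω of x ↦ ⟨g̃_t, x⟩ + ((H_{1:t−1} + λ_{1:t−1} + γ + δ)/4)‖x − x_t‖², and x_{t+1} a minimizer over Ω of x ↦ ⟨g_t, x⟩ + ((H_{1:t−1} + λ_{1:t−1} + γ + δ)/4)‖x − x_t‖². Then for every x* ∈ Ω, ∑_{t=1}^T (f_t(x̂_t) − f_t(x*)) ≤ ((γ + δ)/4)‖x*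 − x_1‖² + 6·∑_{t=1}^T ‖g_t − g̃_t‖²/H_{1:t}. -/
open scoped RealInnerProductSpace
open Finset

/-!
Both `x̂_t` and `x_{t+1}` are proximal points of `x_t` with weight
`A_t = (H_{1:t-1} + λ_{1:t-1} + γ + δ) / 4`, for the hint `g̃_t` and the gradient `g_t`. The
three-point inequality of the two proximal steps bounds `⟪g_t, x̂_t - x*⟫` by
`A_t ‖x* - x_t‖² - A_t ‖x* - x_{t+1}‖²` plus the optimism error
`⟪g_t - g̃_t, x̂_t - x_{t+1}⟫ - A_t ‖x̂_t - x_{t+1}‖²`, and since the proximal map is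
`1 / (2 A_t)`-Lipschitz in the linear term this error is at most `3 ‖g_t - g̃_t‖² / H_{1:t}`.
Strong convexity pays for raising the weight to `A_{t+1} = A_t + (H_t + λ_t) / 4`, up to a term
`λ_t ‖x* - x̂_t‖² / 2 ≤ 2 λ_t R²`, which the choice of `λ_t` keeps below
`3 ‖g_t - g̃_t‖² / H_{1:t}`. The per-round bounds telescope.
-/

theorem le_sqrt_sq_add {a b : ℝ} (hb : 0 ≤ b) : a ≤ √(a ^ 2 + b) :=
  (le_abs_self a).trans (Real.abs_le_sqrt (by linarith))

theorem half_sqrt_sq_add_sub_nonneg {a b : ℝ} (hb : 0 ≤ b) : 0 ≤ (√(a ^ 2 + b) - a) / 2 := by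
  linarith [le_sqrt_sq_add (a := a) hb]

-- `(√(a² + b) - a) / 2` is the nonnegative root of `l² + a l = b / 4`.
theorem four_mul_half_sqrt_sq_add_sub_mul_le {a b s : ℝ} (hb : 0 ≤ b) (hsa : s ≤ a) :
    4 * ((√(a ^ 2 + b) - a) / 2) * s ≤ b := by
  have hl := half_sqrt_sq_add_sub_nonneg (a := a) hb
  have hsq := Real.sq_sqrt (show 0 ≤ a ^ 2 + b by positivity)
  nlinarith

theorem two_mul_mul_sq_mul_le_of_eq_half_sqrt {l S Λ D R : ℝ} (hR : 0 < R) (hΛ : 0 ≤ Λ)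
    (hD : 0 ≤ D) (hl : l = (√((S + Λ) ^ 2 + 6 * D / R ^ 2) - (S + Λ)) / 2) :
    2 * l * R ^ 2 * S ≤ 3 * D := by
  have h := four_mul_half_sqrt_sq_add_sub_mul_le (b := 6 * D / R ^ 2) (by positivity)
    (le_add_of_nonneg_right (a := S) hΛ)
  rw [← hl, le_div_iff₀ (by positivity)] at h
  linarith

theorem sum_Icc_le_of_le_sub_add {r e P : ℕ → ℝ} {T : ℕ} (hT : 1 ≤ T)
    (h : ∀ t ∈ Icc 1 T, r t ≤ P t - P (t + 1) + e t) (hP : 0 ≤ P (T + 1)) :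
    ∑ t ∈ Icc 1 T, r t ≤ P 1 + ∑ t ∈ Icc 1 T, e t := by
  have htele : ∑ t ∈ Icc 1 T, (P t - P (t + 1)) = P 1 - P (T + 1) := by
    rw [← neg_sub, ← sum_Icc_sub hT, ← sum_neg_distrib]
    simp only [neg_sub]
  calc ∑ t ∈ Icc 1 T, r t ≤ ∑ t ∈ Icc 1 T, (P t - P (t + 1) + e t) := sum_le_sum h
    _ ≤ P 1 + ∑ t ∈ Icc 1 T, e t := by rw [sum_add_distrib, htele]; linarith

section ProximalStep

variable {E : Type*} [NormedAddCommGroup E] [InnerProductSpace ℝ E] {Ω : Set E} {c : ℝ}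

theorem IsMinOn.inner_add_two_mul_inner_nonneg {v q p u : E}
    (hmin : IsMinOn (fun z => ⟪v, z⟫ + c * ‖z - q‖ ^ 2) Ω p)
    (hΩ : Convex ℝ Ω) (hp : p ∈ Ω) (hu : u ∈ Ω) :
    0 ≤ ⟪v, u - p⟫ + 2 * c * ⟪p - q, u - p⟫ := by
  have hderiv : HasFDerivWithinAt (fun z => ⟪v, z⟫ + c * ‖z - q‖ ^ 2)
      (innerSL ℝ v + c • (2 • (innerSL ℝ (p - q)).comp (ContinuousLinearMap.id ℝ E))) Ω p :=
    (innerSL ℝ v).hasFDerivWithinAt.add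
      (((hasFDerivAt_id p).sub_const q).hasFDerivWithinAt.norm_sq.const_mul c)
  have := hmin.localize.hasFDerivWithinAt_nonneg hderiv
    (sub_mem_posTangentConeAt_of_segment_subset (hΩ.segment_subset hp hu))
  simpa [inner_sub_left, mul_assoc, mul_left_comm] using this

theorem IsMinOn.inner_add_mul_norm_sub_sq_le {v q p u : E}
    (hmin : IsMinOn (fun z => ⟪v, z⟫ + c * ‖z - q‖ ^ 2) Ω p)
    (hΩ : Convex ℝ Ω) (hp : p ∈ Ω) (hu : u ∈ Ω) :
    ⟪v, p⟫ + c * ‖p - q‖ ^ 2 + c * ‖u - p‖ ^ 2 ≤ ⟪v, u⟫ + c * ‖u - q‖ ^ 2 := by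
  have hvi := hmin.inner_add_two_mul_inner_nonneg hΩ hp hu
  rw [show u - q = (p - q) + (u - p) by abel, norm_add_sq_real]
  rw [inner_sub_right] at hvi
  linarith

theorem IsMinOn.two_mul_mul_norm_sub_le {v v' q p p' : E}
    (hmin : IsMinOn (fun z => ⟪v, z⟫ + c * ‖z - q‖ ^ 2) Ω p)
    (hmin' : IsMinOn (fun z => ⟪v', z⟫ + c * ‖z - q‖ ^ 2) Ω p')
    (hΩ : Convex ℝ Ω) (hp : p ∈ Ω) (hp' : p' ∈ Ω) :
    2 * c * ‖p - p'‖ ≤ ‖v - v'‖ := by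
  have h := hmin.inner_add_two_mul_inner_nonneg hΩ hp hp'
  have h' := hmin'.inner_add_two_mul_inner_nonneg hΩ hp' hp
  have hmono : 2 * c * ‖p - p'‖ ^ 2 ≤ ⟪v' - v, p - p'⟫ := by
    rw [← real_inner_self_eq_norm_sq]
    simp only [inner_sub_left, inner_sub_right] at h h' ⊢
    linarith
  have hcs : ⟪v' - v, p - p'⟫ ≤ ‖v - v'‖ * ‖p - p'‖ :=
    norm_sub_rev v v' ▸ real_inner_le_norm _ _
  rcases (norm_nonneg (p - p')).eq_or_lt with h0 | hpos
  · simp [← h0]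
  · exact le_of_mul_le_mul_right (by nlinarith) hpos

end ProximalStep

section OptimisticStep

variable {E : Type*} [NormedAddCommGroup E] [InnerProductSpace ℝ E] {Ω : Set E}
  {g g' x xhat xnext u : E} {A : ℝ}

theorem inner_sub_le_of_optimistic_step (hΩ : Convex ℝ Ω) (hA : 0 ≤ A)
    (hhat : IsMinOn (fun z => ⟪g', z⟫ + A * ‖z - x‖ ^ 2) Ω xhat)
    (hnext : IsMinOn (fun z => ⟪g, z⟫ + A * ‖z - x‖ ^ 2) Ω xnext)
    (hxhat : xhat ∈ Ω) (hxnext : xnext ∈ Ω) (hu : u ∈ Ω) :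
    ⟪g, xhat - u⟫ ≤ A * ‖u - x‖ ^ 2 - A * ‖u - xnext‖ ^ 2
      + ⟪g - g', xhat - xnext⟫ - A * ‖xhat - xnext‖ ^ 2 := by
  have h1 := hhat.inner_add_mul_norm_sub_sq_le hΩ hxhat hxnext
  have h2 := hnext.inner_add_mul_norm_sub_sq_le hΩ hxnext hu
  have hx : 0 ≤ A * ‖xhat - x‖ ^ 2 := by positivity
  simp only [inner_sub_left, inner_sub_right] at h1 h2 ⊢
  rw [norm_sub_rev xnext xhat] at h1
  linarith

theorem optimistic_step_regret_le {f : E → ℝ} {H l S R : ℝ} (hΩ : Convex ℝ Ω)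
    (hhat : IsMinOn (fun z => ⟪g', z⟫ + A * ‖z - x‖ ^ 2) Ω xhat)
    (hnext : IsMinOn (fun z => ⟪g, z⟫ + A * ‖z - x‖ ^ 2) Ω xnext)
    (hxhat : xhat ∈ Ω) (hxnext : xnext ∈ Ω) (hu : u ∈ Ω)
    (hf : f xhat + ⟪g, u - xhat⟫ + H / 2 * ‖u - xhat‖ ^ 2 ≤ f u)
    (hH : 0 ≤ H) (hl : 0 ≤ l) (hS : 0 < S) (hSA : S ≤ 4 * A) (hHlA : H + l ≤ 4 * A)
    (hdiam : ‖u - xhat‖ ≤ 2 * R) (hlS : 2 * l * R ^ 2 * S ≤ 3 * ‖g - g'‖ ^ 2) :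
    f xhat - f u ≤ A * ‖u - x‖ ^ 2 - (A + (H + l) / 4) * ‖u - xnext‖ ^ 2
      + 6 * ‖g - g'‖ ^ 2 / S := by
  have hA : 0 < A := by linarith
  have hstep := inner_sub_le_of_optimistic_step hΩ hA.le hhat hnext hxhat hxnext hu
  have hstab := hhat.two_mul_mul_norm_sub_le hnext hΩ hxhat hxnext
  rw [norm_sub_rev g'] at hstab
  set d := ‖g - g'‖
  set r := ‖xhat - xnext‖
  have hcross : ⟪g - g', xhat - xnext⟫ + A * r ^ 2 ≤ 3 * d ^ 2 / S := by
    rw [le_div_iff₀ hS]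
    have hcs := real_inner_le_norm (g - g') (xhat - xnext)
    have hr : 0 ≤ r := norm_nonneg _
    nlinarith [mul_le_mul_of_nonneg_right hstab hr,
      mul_le_mul_of_nonneg_left hSA (by positivity : 0 ≤ d * r)]
  have hlR : 2 * l * R ^ 2 ≤ 3 * d ^ 2 / S := by
    rw [le_div_iff₀ hS]; linarith
  have hfar : (H + l) / 4 * ‖u - xnext‖ ^ 2
      ≤ H / 2 * ‖u - xhat‖ ^ 2 + 2 * l * R ^ 2 + 2 * A * r ^ 2 := by
    have hsplit : ‖u - xnext‖ ^ 2 ≤ 2 * (‖u - xhat‖ ^ 2 + r ^ 2) :=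
      (pow_le_pow_left₀ (norm_nonneg _) (norm_sub_le_norm_sub_add_norm_sub u xhat xnext) 2).trans
        add_sq_le
    have hdiam2 : ‖u - xhat‖ ^ 2 ≤ 4 * R ^ 2 := by nlinarith [norm_nonneg (u - xhat)]
    nlinarith [mul_le_mul_of_nonneg_left hdiam2 hl, mul_le_mul_of_nonneg_right hHlA (sq_nonneg r)]
  have hneg : ⟪g, u - xhat⟫ = -⟪g, xhat - u⟫ := by rw [← inner_neg_right, neg_sub]
  linear_combination hf + hstep + hfar + hcross + hlR - hneg

end OptimisticStep

theorem stmt_12 {n T : ℕ} (hT : 1 ≤ T)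
    (Ω : Set (EuclideanSpace ℝ (Fin n))) (hΩ : Convex ℝ Ω)
    (R : ℝ) (hR : 0 < R) (hdiam : ∀ x ∈ Ω, ∀ y ∈ Ω, ‖x - y‖ ≤ 2*R)
    (γ δ Hlow : ℝ) (hγ : 0 < γ) (hδ : 0 < δ) (hHlow : 0 < Hlow)
    (H lam : ℕ → ℝ)
    (hHl : ∀ t ∈ Finset.Icc 1 T, Hlow ≤ H t)
    (hHγ : ∀ t ∈ Finset.Icc 1 T, H t ≤ γ)
    (f : ℕ → EuclideanSpace ℝ (Fin n) → ℝ)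
    (x xhat g gtilde : ℕ → EuclideanSpace ℝ (Fin n))
    (hsc : ∀ t ∈ Finset.Icc 1 T, ∀ y ∈ Ω,
      f t (xhat t) + ⟪g t, y - xhat t⟫ + (H t / 2) * ‖y - xhat t‖^2 ≤ f t y)
    (hlamrec : ∀ t ∈ Finset.Icc 1 T, lam t =
      (Real.sqrt (((∑ s ∈ Finset.Icc 1 t, H s) + (∑ s ∈ Finset.Icc 1 (t-1), lam s))^2
          + 6 * ‖g t - gtilde t‖^2 / R^2)
        - ((∑ s ∈ Finset.Icc 1 t, H s) + (∑ s ∈ Finset.Icc 1 (t-1), lam s))) / 2)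
    (hlamδ : ∀ t ∈ Finset.Icc 1 T, lam t ≤ δ)
    (hx : ∀ t ∈ Finset.Icc 1 (T+1), x t ∈ Ω)
    (hxhat : ∀ t ∈ Finset.Icc 1 T, xhat t ∈ Ω)
    (hhat : ∀ t ∈ Finset.Icc 1 T, IsMinOn
      (fun z => ⟪gtilde t, z⟫ +
        ((∑ s ∈ Finset.Icc 1 (t-1), H s) + (∑ s ∈ Finset.Icc 1 (t-1), lam s) + γ + δ)/4
          * ‖z - x t‖^2) Ω (xhat t))
    (hnext : ∀ t ∈ Finset.Icc 1 T, IsMinOn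
      (fun z => ⟪g t, z⟫ +
        ((∑ s ∈ Finset.Icc 1 (t-1), H s) + (∑ s ∈ Finset.Icc 1 (t-1), lam s) + γ + δ)/4
          * ‖z - x t‖^2) Ω (x (t+1))) :
    ∀ xs ∈ Ω,
      ∑ t ∈ Finset.Icc 1 T, (f t (xhat t) - f t xs) ≤
        ((γ + δ)/4) * ‖xs - x 1‖^2
        + 6 * ∑ t ∈ Finset.Icc 1 T, ‖g t - gtilde t‖^2 / (∑ s ∈ Finset.Icc 1 t, H s) := by
  intro xs hxs
  have hH : ∀ t ∈ Icc 1 T, 0 ≤ H t := fun t ht => hHlow.le.trans (hHl t ht)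
  have hlam : ∀ t ∈ Icc 1 T, 0 ≤ lam t := fun t ht =>
    (hlamrec t ht).symm ▸ half_sqrt_sq_add_sub_nonneg (by positivity)
  have hpartial : ∀ a : ℕ → ℝ, (∀ t ∈ Icc 1 T, 0 ≤ a t) → ∀ k ≤ T, 0 ≤ ∑ s ∈ Icc 1 k, a s :=
    fun a ha k hk => sum_nonneg fun s hs => ha s (Icc_subset_Icc_right hk hs)
  set P : ℕ → ℝ := fun t =>
    ((∑ s ∈ Icc 1 (t - 1), H s) + (∑ s ∈ Icc 1 (t - 1), lam s) + γ + δ) / 4 * ‖xs - x t‖ ^ 2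
  have hround : ∀ t ∈ Icc 1 T, f t (xhat t) - f t xs
      ≤ P t - P (t + 1) + 6 * (‖g t - gtilde t‖ ^ 2 / ∑ s ∈ Icc 1 t, H s) := by
    intro t ht
    obtain ⟨k, rfl⟩ : ∃ k, t = k + 1 := ⟨t - 1, by grind⟩
    have hk : k ≤ T := by grind
    have hSk := sum_Icc_succ_top (Nat.le_add_left 1 k) H
    have hΛk := sum_Icc_succ_top (Nat.le_add_left 1 k) lam
    have hS := hpartial H hH k hk
    have hΛ := hpartial lam hlam k hk
    have hlamk := hlamrec (k + 1) ht
    have hhatk := hhat (k + 1) ht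
    have hnextk := hnext (k + 1) ht
    simp only [Nat.add_sub_cancel, hSk] at hlamk hhatk hnextk
    have := optimistic_step_regret_le hΩ hhatk hnextk (hxhat _ ht) (hx _ (by grind)) hxs
      (hsc _ ht xs hxs) (hH _ ht) (hlam _ ht) (by linarith [hHl _ ht]) (by linarith [hHγ _ ht])
      (by linarith [hHγ _ ht, hlamδ _ ht]) (hdiam _ hxs _ (hxhat _ ht))
      (two_mul_mul_sq_mul_le_of_eq_half_sqrt hR hΛ (by positivity) hlamk)
    simp only [P, Nat.add_sub_cancel, hSk, hΛk]
    linear_combination this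
  have hPT : 0 ≤ P (T + 1) := mul_nonneg (by
    simp only [Nat.add_sub_cancel]
    linarith [hpartial H hH T le_rfl, hpartial lam hlam T le_rfl]) (sq_nonneg _)
  have hP1 : P 1 = (γ + δ) / 4 * ‖xs - x 1‖ ^ 2 := by simp [P]
  rw [mul_sum, ← hP1]
  exact sum_Icc_le_of_le_sub_add hT hround hPT
end

section
/- Let Ω ⊆ ℝ^n be a convex set, let ψ : ℝ^n → ℝ and f : ℝ^n → ℝ be differentiable with gradients ∇ψ and ∇f, let f be convex, let g, y ∈ ℝ^n, and let x* ∈ Ω be a minimizer over Ω of the map x ↦ ⟨g, x⟩ + f(x) + B_ψ(x, y). Then for every z ∈ Ω, ⟨x* − z, g⟩ ≤ ⟨z − x*, ∇f(x*)⟩ + B_ψ(z, y) − B_ψ(z, x*) − B_ψ(x*, y). -/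
/-!
At the minimizer `x*` the first-order optimality condition over the convex set `Ω` gives
`0 ≤ ⟪g + ∇f x* + ∇ψ x* - ∇ψ y, z - x*⟫`, and the three-point identity of Bregman
divergences turns `⟪∇ψ x* - ∇ψ y, z - x*⟫` into `B(z, y) - B(z, x*) - B(x*, y)`.
-/

open scoped RealInnerProductSpace
open Finset

section Gradient

variable {F : Type*} [NormedAddCommGroup F] [InnerProductSpace ℝ F] [CompleteSpace F]
  {φ χ : F → ℝ} {d e x : F}

theorem HasGradientAt.add (hφ : HasGradientAt φ d x) (hχ : HasGradientAt χ e x) :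
    HasGradientAt (fun x => φ x + χ x) (d + e) x := by
  rw [hasGradientAt_iff_hasFDerivAt, map_add]
  exact (hasGradientAt_iff_hasFDerivAt.mp hφ).add (hasGradientAt_iff_hasFDerivAt.mp hχ)

theorem HasGradientAt.sub (hφ : HasGradientAt φ d x) (hχ : HasGradientAt χ e x) :
    HasGradientAt (fun x => φ x - χ x) (d - e) x := by
  rw [hasGradientAt_iff_hasFDerivAt, map_sub]
  exact (hasGradientAt_iff_hasFDerivAt.mp hφ).sub (hasGradientAt_iff_hasFDerivAt.mp hχ)

theorem hasGradientAt_inner_right (a : F) : HasGradientAt (fun x => ⟪a, x⟫) a x :=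
  hasGradientAt_iff_hasFDerivAt.mpr (innerSL ℝ a).hasFDerivAt

theorem IsMinOn.inner_gradient_sub_nonneg_s14 {s : Set F} {z : F} (hs : Convex ℝ s)
    (hmin : IsMinOn φ s x) (hx : x ∈ s) (hφ : HasGradientAt φ d x) (hz : z ∈ s) :
    0 ≤ ⟪d, z - x⟫ := by
  have hcone : z - x ∈ posTangentConeAt s x :=
    sub_mem_posTangentConeAt_of_segment_subset (hs.segment_subset hx hz)
  simpa using hmin.localize.hasFDerivWithinAt_nonneg
    (hasGradientAt_iff_hasFDerivAt.mp hφ).hasFDerivWithinAt hcone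

end Gradient

section Bregman

variable {n : ℕ} {ψ : EuclideanSpace ℝ (Fin n) → ℝ}
  {Dψ : EuclideanSpace ℝ (Fin n) → EuclideanSpace ℝ (Fin n)}

theorem breg_three_point_s14 (x y z : EuclideanSpace ℝ (Fin n)) :
    breg ψ Dψ z y - breg ψ Dψ z x - breg ψ Dψ x y = ⟪Dψ x - Dψ y, z - x⟫ := by
  simp only [breg, inner_sub_left, inner_sub_right]
  ring

theorem hasGradientAt_breg_left {x : EuclideanSpace ℝ (Fin n)}
    (hψ : HasGradientAt ψ (Dψ x) x) (y : EuclideanSpace ℝ (Fin n)) :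
    HasGradientAt (fun x => breg ψ Dψ x y) (Dψ x - Dψ y) x := by
  convert (hψ.sub (hasGradientAt_inner_right (Dψ y))).add
    (hasGradientAt_const x (⟪Dψ y, y⟫ - ψ y)) using 1
  · funext x
    simp only [breg, inner_sub_right]
    ring
  · rw [add_zero]

end Bregman

theorem stmt_14_general {n : ℕ} (Ω : Set (EuclideanSpace ℝ (Fin n))) (hΩ : Convex ℝ Ω)
    (ψ f : EuclideanSpace ℝ (Fin n) → ℝ)
    (Dψ Df : EuclideanSpace ℝ (Fin n) → EuclideanSpace ℝ (Fin n))
    (hψdiff : ∀ z, HasGradientAt ψ (Dψ z) z)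
    (hfdiff : ∀ z, HasGradientAt f (Df z) z)
    (g y xs : EuclideanSpace ℝ (Fin n)) (hxs : xs ∈ Ω)
    (hmin : IsMinOn (fun x => ⟪g, x⟫ + f x + breg ψ Dψ x y) Ω xs) :
    ∀ z ∈ Ω, ⟪xs - z, g⟫ ≤ ⟪z - xs, Df xs⟫ +
      breg ψ Dψ z y - breg ψ Dψ z xs - breg ψ Dψ xs y := by
  intro z hz
  have hgrad := ((hasGradientAt_inner_right g).add (hfdiff xs)).add
    (hasGradientAt_breg_left (hψdiff xs) y)
  have hopt := hmin.inner_gradient_sub_nonneg_s14 hΩ hxs hgrad hz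
  rw [add_sub_assoc, add_sub_assoc, breg_three_point_s14]
  rw [inner_add_left, inner_add_left] at hopt
  have hg : ⟪xs - z, g⟫ = -⟪g, z - xs⟫ := by
    rw [← inner_neg_right, neg_sub, real_inner_comm]
  linarith [real_inner_comm (z - xs) (Df xs)]

theorem stmt_14 {n : ℕ} (Ω : Set (EuclideanSpace ℝ (Fin n))) (hΩ : Convex ℝ Ω)
    (ψ f : EuclideanSpace ℝ (Fin n) → ℝ)
    (Dψ Df : EuclideanSpace ℝ (Fin n) → EuclideanSpace ℝ (Fin n))
    (hψdiff : ∀ z, HasGradientAt ψ (Dψ z) z)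
    (hfdiff : ∀ z, HasGradientAt f (Df z) z)
    (hfconv : ConvexOn ℝ Set.univ f)
    (g y xs : EuclideanSpace ℝ (Fin n)) (hxs : xs ∈ Ω)
    (hmin : IsMinOn (fun x => ⟪g, x⟫ + f x + breg ψ Dψ x y) Ω xs) :
    ∀ z ∈ Ω, ⟪xs - z, g⟫ ≤ ⟪z - xs, Df xs⟫ +
      breg ψ Dψ z y - breg ψ Dψ z xs - breg ψ Dψ xs y :=
  stmt_14_general Ω hΩ ψ f Dψ Df hψdiff hfdiff g y xs hxs hmin
end
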